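/- Let D be a complete, extremally co-well-powered, (extremal epi, mono) category. Then there is a functor K : QD → KD lifting the projective limit functor lim : QD → D (i.e., the underlying object of K(X,Q) is lim Q, with the filtration whose elements are the canonical morphisms lim Q → X_δ induced by the elements δ ∈ Q), which is left adjoint to the inclusion functor KD → QD; moreover the composition of K with the inclusion KD → QD is naturally isomorphic to the identity functor on KD. -/

import Mathlib

open CategoryTheory CategoryTheory.Limits

universe w v u v₂ u₂

namespace FilteredCats

variable {D : Type u} [Category.{v} D]

/-- The class of morphisms of `D` with source `X`. -/
def MorFrom (X : D) : Type (max u v) := Σ Y : D, X ⟶ Y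

/-- `Dom δ₁ δ₂` means `δ₁ ≥ δ₂`: there is `h` with `h ∘ δ₁ = δ₂`. -/
def Dom {X : D} (δ₁ δ₂ : MorFrom X) : Prop :=
  ∃ h : δ₁.1 ⟶ δ₂.1, δ₁.2 ≫ h = δ₂.2

/-- A projective filtration on `X`: a nonempty, directed, saturated class of
morphisms with source `X`. -/
structure ProjFilt (X : D) where
  carrier : Set (MorFrom X)
  nonempty' : carrier.Nonempty
  directed' : ∀ δ₁ ∈ carrier, ∀ δ₂ ∈ carrier, ∃ δ ∈ carrier, Dom δ δ₁ ∧ Dom δ δ₂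
  saturated' : ∀ δ₁ ∈ carrier, ∀ δ₂, Dom δ₁ δ₂ → δ₂ ∈ carrier

/-- The pull back of a set of morphisms with source `X` along `f : X' ⟶ X`. -/
def pullSet {X' X : D} (f : X' ⟶ X) (S : Set (MorFrom X)) : Set (MorFrom X') :=
  {δ' | ∃ δ ∈ S, δ' = ⟨δ.1, f ≫ δ.2⟩}

/-- The pull back of a projective filtration along `f : X' ⟶ X`. -/
def ProjFilt.pull {X' X : D} (f : X' ⟶ X) (P : ProjFilt X) : ProjFilt X' where
  carrier := pullSet f P.carrier
  nonempty' := by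
    obtain ⟨δ, hδ⟩ := P.nonempty'
    exact ⟨⟨δ.1, f ≫ δ.2⟩, δ, hδ, rfl⟩
  directed' := by
    rintro _ ⟨δ₁, h₁, rfl⟩ _ ⟨δ₂, h₂, rfl⟩
    obtain ⟨δ, hδ, ⟨g₁, hg₁⟩, ⟨g₂, hg₂⟩⟩ := P.directed' δ₁ h₁ δ₂ h₂
    exact ⟨⟨δ.1, f ≫ δ.2⟩, ⟨δ, hδ, rfl⟩,
      ⟨g₁, by simp [hg₁]⟩, ⟨g₂, by simp [hg₂]⟩⟩
  saturated' := by
    rintro _ ⟨δ, hδ, rfl⟩ δ₂ ⟨h, hh⟩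
    refine ⟨⟨δ₂.1, δ.2 ≫ h⟩, P.saturated' δ hδ _ ⟨h, rfl⟩, ?_⟩
    obtain ⟨Y₂, g₂⟩ := δ₂
    have hg : g₂ = f ≫ (δ.2 ≫ h) := by simpa using hh.symm
    exact Sigma.ext rfl (heq_of_eq hg)

/-- A projectively filtered object of `D`. -/
structure PObj (D : Type u) [Category.{v} D] where
  base : D
  filt : ProjFilt base

/-- A morphism of projectively filtered objects: a morphism of the underlying
objects such that the pull back of the target filtration is contained in the
source filtration. -/
structure PHom (A B : PObj D) : Type v where
  toHom : A.base ⟶ B.base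
  mem : ∀ δ ∈ B.filt.carrier, (⟨δ.1, toHom ≫ δ.2⟩ : MorFrom A.base) ∈ A.filt.carrier

theorem PHom.ext' {A B : PObj D} {f g : PHom A B} (h : f.toHom = g.toHom) : f = g := by
  cases f; cases g; cases h; rfl

instance : Category.{v} (PObj D) where
  Hom := PHom
  id A := ⟨𝟙 A.base, fun δ hδ => by rw [Category.id_comp]; exact hδ⟩
  comp {A B C} f g := ⟨f.toHom ≫ g.toHom, fun δ hδ => by
    have h1 := g.mem δ hδ
    have h2 := f.mem _ h1
    simpa using h2⟩
  id_comp f := PHom.ext' (Category.id_comp _)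
  comp_id f := PHom.ext' (Category.comp_id _)
  assoc f g h := PHom.ext' (Category.assoc _ _ _)

@[simp] theorem PObj.id_toHom (A : PObj D) : PHom.toHom (𝟙 A) = 𝟙 A.base := rfl
@[simp] theorem PObj.comp_toHom {A B C : PObj D} (f : A ⟶ B) (g : B ⟶ C) :
    PHom.toHom (f ≫ g) = PHom.toHom f ≫ PHom.toHom g := rfl

/-- The forgetful functor `PD → D`. -/
def Pforget (D : Type u) [Category.{v} D] : PObj D ⥤ D where
  obj A := A.base
  map f := PHom.toHom f

/-- The discrete filtration functor `D → PD`, `X ↦ (X, M(X))`. -/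
def Pdiscrete (D : Type u) [Category.{v} D] : D ⥤ PObj D where
  obj X :=
    { base := X
      filt :=
        { carrier := Set.univ
          nonempty' := ⟨⟨X, 𝟙 X⟩, trivial⟩
          directed' := fun δ₁ _ δ₂ _ =>
            ⟨⟨X, 𝟙 X⟩, trivial, ⟨δ₁.2, Category.id_comp _⟩, ⟨δ₂.2, Category.id_comp _⟩⟩
          saturated' := fun _ _ _ _ => trivial } }
  map f := ⟨f, fun _ _ => trivial⟩

/-- The functor `PD → PE` induced by a functor `G : D → E`. -/
def Pfunctor {E : Type u₂} [Category.{v₂} E] (G : D ⥤ E) : PObj D ⥤ PObj E where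
  obj A :=
    { base := G.obj A.base
      filt :=
        { carrier := {δ' | ∃ δ ∈ A.filt.carrier,
            Dom (⟨G.obj δ.1, G.map δ.2⟩ : MorFrom (G.obj A.base)) δ'}
          nonempty' := by
            obtain ⟨δ, hδ⟩ := A.filt.nonempty'
            exact ⟨⟨G.obj δ.1, G.map δ.2⟩, δ, hδ, ⟨𝟙 _, Category.comp_id _⟩⟩
          directed' := by
            rintro δ'₁ ⟨δ₁, h₁, g₁, hg₁⟩ δ'₂ ⟨δ₂, h₂, g₂, hg₂⟩
            obtain ⟨δ, hδ, ⟨k₁, hk₁⟩, ⟨k₂, hk₂⟩⟩ := A.filt.directed' δ₁ h₁ δ₂ h₂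
            refine ⟨⟨G.obj δ.1, G.map δ.2⟩, ⟨δ, hδ, ⟨𝟙 _, Category.comp_id _⟩⟩,
              ⟨G.map k₁ ≫ g₁, ?_⟩, ⟨G.map k₂ ≫ g₂, ?_⟩⟩
            · rw [← Category.assoc, ← G.map_comp, hk₁, hg₁]
            · rw [← Category.assoc, ← G.map_comp, hk₂, hg₂]
          saturated' := by
            rintro δ'₁ ⟨δ, hδ, g, hg⟩ δ'₂ ⟨h, hh⟩
            exact ⟨δ, hδ, ⟨g ≫ h, by rw [← Category.assoc, hg, hh]⟩⟩ } }
  map {A B} f :=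
    ⟨G.map (PHom.toHom f), by
      rintro δ' ⟨δ, hδ, g, hg⟩
      exact ⟨⟨δ.1, PHom.toHom f ≫ δ.2⟩, f.mem δ hδ,
        ⟨g, by rw [← hg, ← Category.assoc, ← G.map_comp]⟩⟩⟩
  map_id A := PHom.ext' (G.map_id _)
  map_comp f g := PHom.ext' (G.map_comp _ _)

/-- An extremal epimorphism: an epimorphism such that in any factorisation
through a monomorphism, the monomorphism is an isomorphism. -/
def ExtremalEpi {C : Type u₂} [Category.{v₂} C] {X Y : C} (e : X ⟶ Y) : Prop :=
  Epi e ∧ ∀ ⦃Z : C⦄ (g : X ⟶ Z) (m : Z ⟶ Y), Mono m → g ≫ m = e → IsIso m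

/-- An (extremal epi, mono) category: every morphism factors as an extremal
epimorphism followed by a monomorphism and such factorisations have the
diagonal fill-in property. -/
structure EMCat (C : Type u₂) [Category.{v₂} C] : Prop where
  fact : ∀ {X Y : C} (f : X ⟶ Y), ∃ (Z : C) (e : X ⟶ Z) (m : Z ⟶ Y),
    ExtremalEpi e ∧ Mono m ∧ e ≫ m = f
  diag : ∀ {A B Z X : C} (e : A ⟶ B) (m : Z ⟶ X) (g : A ⟶ Z) (h : B ⟶ X),
    ExtremalEpi e → Mono m → g ≫ m = e ≫ h → ∃ d : B ⟶ Z, e ≫ d = g ∧ d ≫ m = h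

/-- A projective filtration is reduced if it has an initial subclass of
extremal epimorphisms. -/
def ProjFilt.Reduced {X : D} (P : ProjFilt X) : Prop :=
  ∀ δ ∈ P.carrier, ∃ ε ∈ P.carrier, ExtremalEpi ε.2 ∧ Dom ε δ

/-- The category of reduced projectively filtered objects of `D`. -/
def QObj (D : Type u) [Category.{v} D] := ObjectProperty.FullSubcategory (fun A : PObj D => A.filt.Reduced)

instance : Category.{v} (QObj D) := ObjectProperty.FullSubcategory.category _

/-- The inclusion functor `QD → PD`. -/
def qpInclusion (D : Type u) [Category.{v} D] : QObj D ⥤ PObj D :=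
  ObjectProperty.ι _

/-- A category is extremally co-well-powered if every object has, up to
isomorphism, only a (small) set of extremal epimorphisms out of it. -/
def ECWP (C : Type u₂) [Category.{v₂} C] : Prop :=
  ∀ X : C, ∃ (ι : Type v₂) (Y : ι → C) (e : ∀ i, X ⟶ Y i),
    (∀ i, ExtremalEpi (e i)) ∧
    ∀ ⦃Z : C⦄ (f : X ⟶ Z), ExtremalEpi f → ∃ (i : ι) (φ : Y i ≅ Z), e i ≫ φ.hom = f

/-- The category `(P, D)` associated to a projective filtration: objects are the
elements of `P`, morphisms `δ₁ → δ₂` are morphisms `g` of `D` with `g ∘ δ₁ = δ₂`. -/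
def FiltCat {X : D} (P : ProjFilt X) : Type (max u v) := {δ : MorFrom X // δ ∈ P.carrier}

instance {X : D} (P : ProjFilt X) : Category.{v} (FiltCat P) where
  Hom δ₁ δ₂ := {g : δ₁.1.1 ⟶ δ₂.1.1 // δ₁.1.2 ≫ g = δ₂.1.2}
  id δ := ⟨𝟙 _, Category.comp_id _⟩
  comp f g := ⟨f.1 ≫ g.1, by rw [← Category.assoc, f.2, g.2]⟩
  id_comp f := Subtype.ext (Category.id_comp _)
  comp_id f := Subtype.ext (Category.comp_id _)
  assoc f g h := Subtype.ext (Category.assoc _ _ _)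

/-- The functor `(P, D) → D` sending an element of the filtration to its target. -/
def FiltDiagram {X : D} (P : ProjFilt X) : FiltCat P ⥤ D where
  obj δ := δ.1.1
  map g := g.1

/-- The canonical cone on the diagram of a projective filtration, with apex the
underlying object. -/
def filtCone {X : D} (P : ProjFilt X) : Limits.Cone (FiltDiagram P) where
  pt := X
  π :=
    { app := fun δ => δ.1.2
      naturality := fun δ₁ δ₂ g => by
        have := g.2
        dsimp [FiltDiagram] at *
        simp [this] }

/-- A reduced projective filtration is an iso-filtration if the canonical cone
on its diagram is a limit cone, i.e. the limit exists and the canonical morphism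
from the underlying object to it is an isomorphism. -/
def IsoFilt {X : D} (P : ProjFilt X) : Prop :=
  Nonempty (Limits.IsLimit (filtCone P))

/-- The category of iso-filtered objects of `D`. -/
def KObj (D : Type u) [Category.{v} D] :=
  ObjectProperty.FullSubcategory (fun A : QObj D => IsoFilt A.obj.filt)

instance : Category.{v} (KObj D) := ObjectProperty.FullSubcategory.category _

/-- The inclusion functor `KD → QD`. -/
def kqInclusion (D : Type u) [Category.{v} D] : KObj D ⥤ QObj D :=
  ObjectProperty.ι _

/-- The forgetful functor `KD → D`. -/
def Kforget (D : Type u) [Category.{v} D] : KObj D ⥤ D :=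
  kqInclusion D ⋙ qpInclusion D ⋙ Pforget D

/-- The smallest projective filtration containing a class of morphisms
(as a class). -/
def genSet {X : D} (S : Set (MorFrom X)) : Set (MorFrom X) :=
  {δ | ∀ P : ProjFilt X, S ⊆ P.carrier → δ ∈ P.carrier}

/-- The reduction of a class of morphisms: the saturation of the class of
extremal epimorphism parts of (extremal epi, mono)-factorisations of its
elements. -/
def redSet {X : D} (S : Set (MorFrom X)) : Set (MorFrom X) :=
  {δ | ∃ ε : MorFrom X, ExtremalEpi ε.2 ∧
    (∃ δ' ∈ S, ∃ m : ε.1 ⟶ δ'.1, Mono m ∧ ε.2 ≫ m = δ'.2) ∧ Dom ε δ}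

/-- The push forward of a filtration class along `f` (single morphism case). -/
def pushSet {X Y : D} (f : X ⟶ Y) (S : Set (MorFrom X)) : Set (MorFrom Y) :=
  {g | (⟨g.1, f ≫ g.2⟩ : MorFrom X) ∈ S}

/-- The discrete filtration on an object, as an iso-filtered object. -/
def kDiscreteObj (X : D) : KObj D where
  obj :=
    { obj := (Pdiscrete D).obj X
      property := fun δ _ => ⟨⟨X, 𝟙 X⟩, trivial,
        ⟨(inferInstance : Epi (𝟙 X)), fun _ g m hm hgm => by
          haveI : IsSplitEpi m := ⟨⟨⟨g, hgm⟩⟩⟩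
          exact isIso_of_mono_of_isSplitEpi m⟩,
        ⟨δ.2, Category.id_comp _⟩⟩ }
  property := ⟨{
    lift := fun c => c.π.app ⟨⟨X, 𝟙 X⟩, trivial⟩
    fac := fun c j => by
      have h := c.π.naturality (X := ⟨⟨X, 𝟙 X⟩, trivial⟩) (Y := j)
        ⟨j.1.2, Category.id_comp _⟩
      dsimp [FiltDiagram, filtCone] at h ⊢
      exact h.symm.trans (Category.id_comp _)
    uniq := fun c m hm => by
      have h := hm ⟨⟨X, 𝟙 X⟩, trivial⟩
      rw [← Category.comp_id m]
      exact h }⟩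

/-- The discrete filtration functor `D → KD`. -/
def kDiscrete (D : Type u) [Category.{v} D] : D ⥤ KObj D where
  obj X := kDiscreteObj X
  map f := ⟨f, fun _ _ => trivial⟩
  map_id _ := rfl
  map_comp _ _ := rfl

/-- The morphism in `KD` from an iso-filtered object to the discrete object on
the target of an element of its filtration. -/
def kToDiscrete {A : KObj D} (δ : MorFrom A.obj.obj.base)
    (hδ : δ ∈ A.obj.obj.filt.carrier) : A ⟶ kDiscreteObj δ.1 :=
  ⟨⟨show PHom A.obj.obj ((kDiscreteObj δ.1).obj.obj) from
    ⟨δ.2, fun γ _ => A.obj.obj.filt.saturated' δ hδ _ ⟨γ.2, rfl⟩⟩⟩⟩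

/-- The natural transformation `P(G) → P(H)` induced by `ν : G → H`. -/
def Pnat {E : Type u₂} [Category.{v₂} E] {G H : D ⥤ E} (ν : G ⟶ H) :
    Pfunctor G ⟶ Pfunctor H where
  app A :=
    ⟨ν.app A.base, by
      rintro δ' ⟨δ, hδ, g, hg⟩
      exact ⟨δ, hδ, ⟨ν.app δ.1 ≫ g, by
        rw [← Category.assoc, ν.naturality, Category.assoc, hg]; rfl⟩⟩⟩
  naturality {A B} f := PHom.ext' (ν.naturality (PHom.toHom f))
/-! The diagram `(Q, D)` of a reduced filtration is large, but its extremal epimorphisms are, up to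
isomorphism, a set and span an initial subcategory (maps out of an epimorphism are unique), so
`lim Q` exists. The legs of the limit cone filter `lim Q`; this filtration is reduced because each
extremal `ε ∈ Q` factors through its leg, and it is an iso-filtration because its diagram is that
of `Q`. A morphism `(X, Q) ⟶ B` to an iso-filtered `B` extends uniquely along `X ⟶ lim Q`, as
`B` is the limit of its own filtration: this universal property is the adjunction, and its counit
is invertible because `KD ⥤ QD` is fully faithful. -/

theorem ExtremalEpi.comp_isIso {X Y Z : D} {e : X ⟶ Y} (he : ExtremalEpi e) (m : Y ⟶ Z)
    [IsIso m] : ExtremalEpi (e ≫ m) := by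
  have := he.1
  refine ⟨epi_comp _ _, fun W g m' hm' hfac => ?_⟩
  have : IsIso (m' ≫ inv m) := he.2 g (m' ≫ inv m) (mono_comp _ _)
    (by rw [← Category.assoc, hfac, Category.assoc, IsIso.hom_inv_id, Category.comp_id])
  simpa using (inferInstance : IsIso ((m' ≫ inv m) ≫ m))

theorem ExtremalEpi.of_comp (hEM : EMCat D) {X Y Z : D} {u : X ⟶ Y} {p : Y ⟶ Z}
    (h : ExtremalEpi (u ≫ p)) : ExtremalEpi p := by
  obtain ⟨W, e, m, he, hm, rfl⟩ := hEM.fact p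
  have : IsIso m := h.2 (u ≫ e) m hm (Category.assoc _ _ _)
  exact he.comp_isIso m

theorem FiltCat.hom_ext_of_epi {X : D} {P : ProjFilt X} {j j' : FiltCat P} (hj : Epi j.1.2)
    (g g' : j ⟶ j') : g = g' :=
  Subtype.ext ((cancel_epi j.1.2).1 (g.2.trans g'.2.symm))

theorem FiltCat.cone_π_congr {X : D} {P : ProjFilt X} (c : Cone (FiltDiagram P)) {Y : D}
    {p p' : X ⟶ Y} (h : p = p') (hp : ⟨Y, p⟩ ∈ P.carrier) (hp' : ⟨Y, p'⟩ ∈ P.carrier) :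
    c.π.app ⟨⟨Y, p⟩, hp⟩ = c.π.app ⟨⟨Y, p'⟩, hp'⟩ := by
  subst h; rfl

theorem ProjFilt.Reduced.exists_index {X : D} {Q : ProjFilt X} (hQ : Q.Reduced) {ι : Type*}
    {Y : ι → D} {e : ∀ i, X ⟶ Y i}
    (hcov : ∀ ⦃Z : D⦄ (f : X ⟶ Z), ExtremalEpi f → ∃ (i : ι) (φ : Y i ≅ Z), e i ≫ φ.hom = f)
    (δ : MorFrom X) (hδ : δ ∈ Q.carrier) :
    ∃ i, (⟨Y i, e i⟩ : MorFrom X) ∈ Q.carrier ∧ Dom ⟨Y i, e i⟩ δ := by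
  obtain ⟨ε, hε, hεe, k, hk⟩ := hQ δ hδ
  obtain ⟨i, φ, hφ⟩ := hcov ε.2 hεe
  exact ⟨i, Q.saturated' ε hε _ ⟨φ.inv, by simp [← hφ]⟩, φ.hom ≫ k, by simp [reassoc_of% hφ, hk]⟩

theorem hasLimit_filtDiagram [HasLimits D] (hecwp : ECWP D) {X : D} {Q : ProjFilt X}
    (hQ : Q.Reduced) : HasLimit (FiltDiagram Q) := by
  obtain ⟨ι, Y, e, he, hcov⟩ := hecwp X
  let index : {i : ι // (⟨Y i, e i⟩ : MorFrom X) ∈ Q.carrier} → FiltCat Q := fun i => ⟨_, i.2⟩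
  let F := inducedFunctor index
  have hepi : ∀ i, Epi (F.obj i).1.2 := fun i => (he i.1).1
  have hF : ∀ δ : FiltCat Q, ∃ i, Nonempty (F.obj i ⟶ δ) := fun δ => by
    obtain ⟨i, hi, k, hk⟩ := hQ.exists_index hcov δ.1 δ.2
    exact ⟨⟨i, hi⟩, ⟨⟨k, hk⟩⟩⟩
  have : IsCofilteredOrEmpty (InducedCategory (FiltCat Q) index) :=
    { cone_objs := fun i₁ i₂ => by
        obtain ⟨δ, hδ, ⟨g₁, hg₁⟩, ⟨g₂, hg₂⟩⟩ := Q.directed' _ i₁.2 _ i₂.2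
        obtain ⟨i, ⟨k⟩⟩ := hF ⟨δ, hδ⟩
        exact ⟨i, InducedCategory.homMk (k ≫ ⟨g₁, hg₁⟩),
          InducedCategory.homMk (k ≫ ⟨g₂, hg₂⟩), trivial⟩
      cone_maps := fun i _ g g' =>
        ⟨i, 𝟙 i, InducedCategory.hom_ext (FiltCat.hom_ext_of_epi (hepi i) _ _)⟩ }
  have : F.Initial := Functor.initial_of_exists_of_isCofiltered F hF
    fun s s' => ⟨_, 𝟙 _, by rw [FiltCat.hom_ext_of_epi (hepi _) s s']⟩
  exact Functor.Initial.hasLimit_of_comp F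

section OfCone

variable {X : D} {Q : ProjFilt X}

def ProjFilt.ofCone (c : Cone (FiltDiagram Q)) : ProjFilt c.pt where
  carrier := {δ | ∃ j : FiltCat Q, δ = ⟨j.1.1, c.π.app j⟩}
  nonempty' := by
    obtain ⟨δ, hδ⟩ := Q.nonempty'
    exact ⟨_, ⟨δ, hδ⟩, rfl⟩
  directed' := by
    rintro _ ⟨j₁, rfl⟩ _ ⟨j₂, rfl⟩
    obtain ⟨δ, hδ, ⟨g₁, hg₁⟩, ⟨g₂, hg₂⟩⟩ := Q.directed' j₁.1 j₁.2 j₂.1 j₂.2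
    exact ⟨_, ⟨⟨δ, hδ⟩, rfl⟩, ⟨g₁, c.w (⟨g₁, hg₁⟩ : ⟨δ, hδ⟩ ⟶ j₁)⟩,
      ⟨g₂, c.w (⟨g₂, hg₂⟩ : ⟨δ, hδ⟩ ⟶ j₂)⟩⟩
  saturated' := by
    rintro _ ⟨j, rfl⟩ δ ⟨h, hh⟩
    let j' : FiltCat Q := ⟨⟨δ.1, j.1.2 ≫ h⟩, Q.saturated' j.1 j.2 _ ⟨h, rfl⟩⟩
    exact ⟨j', Sigma.ext rfl (heq_of_eq (hh.symm.trans (c.w (⟨h, rfl⟩ : j ⟶ j'))))⟩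

theorem ProjFilt.eq_π_of_mem_ofCone {c : Cone (FiltDiagram Q)} {u : X ⟶ c.pt}
    (hu : ∀ j, u ≫ c.π.app j = j.1.2) {Y : D} {p : c.pt ⟶ Y}
    (hp : ⟨Y, p⟩ ∈ (ProjFilt.ofCone c).carrier) :
    ∃ h : ⟨Y, u ≫ p⟩ ∈ Q.carrier, p = c.π.app ⟨⟨Y, u ≫ p⟩, h⟩ := by
  obtain ⟨⟨⟨Y', p'⟩, hp'⟩, hk⟩ := hp
  obtain ⟨rfl, hk⟩ := Sigma.mk.inj_iff.1 hk
  obtain rfl := eq_of_heq hk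
  have hu' : u ≫ c.π.app ⟨⟨Y, p'⟩, hp'⟩ = p' := hu _
  have hmem : ⟨Y, u ≫ c.π.app ⟨⟨Y, p'⟩, hp'⟩⟩ ∈ Q.carrier := hu'.symm ▸ hp'
  exact ⟨hmem, FiltCat.cone_π_congr c hu'.symm _ _⟩

theorem ProjFilt.reduced_ofCone (hEM : EMCat D) (hQ : Q.Reduced) {c : Cone (FiltDiagram Q)}
    {u : X ⟶ c.pt} (hu : ∀ j, u ≫ c.π.app j = j.1.2) : (ProjFilt.ofCone c).Reduced := by
  rintro _ ⟨j, rfl⟩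
  obtain ⟨ε, hε, hεe, g, hg⟩ := hQ j.1 j.2
  refine ⟨_, ⟨⟨ε, hε⟩, rfl⟩, ExtremalEpi.of_comp hEM (u := u) ?_,
    g, c.w (⟨g, hg⟩ : ⟨ε, hε⟩ ⟶ j)⟩
  exact (hu ⟨ε, hε⟩).symm ▸ hεe

theorem ProjFilt.isoFilt_ofCone {c : Cone (FiltDiagram Q)} (hc : IsLimit c) :
    IsoFilt (ProjFilt.ofCone c) := by
  let leg (j : FiltCat Q) : FiltCat (ProjFilt.ofCone c) := ⟨_, j, rfl⟩
  let restrict (s : Cone (FiltDiagram (ProjFilt.ofCone c))) : Cone (FiltDiagram Q) :=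
    { pt := s.pt
      π := { app := fun j => s.π.app (leg j)
             naturality := fun j j' g => s.π.naturality (⟨g.1, c.w g⟩ : leg j ⟶ leg j') } }
  refine ⟨{ lift := fun s => hc.lift (restrict s), fac := ?_, uniq := ?_ }⟩
  · rintro s ⟨_, j, rfl⟩
    exact hc.fac _ j
  · exact fun s m hm => hc.uniq (restrict s) m fun j => hm (leg j)

end OfCone

def FiltCat.pull {A B : PObj D} (f : A ⟶ B) : FiltCat B.filt ⥤ FiltCat A.filt where
  obj j := ⟨⟨j.1.1, f.toHom ≫ j.1.2⟩, f.mem j.1 j.2⟩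
  map g := ⟨g.1, by rw [Category.assoc, g.2]⟩

instance : (kqInclusion D).Full := ObjectProperty.full_ι _

instance : (kqInclusion D).Faithful := ObjectProperty.faithful_ι _

section Reflection

variable [∀ A : QObj D, HasLimit (FiltDiagram A.obj.filt)] (hEM : EMCat D)

noncomputable def limObj (A : QObj D) : KObj D where
  obj :=
    { obj := ⟨limit (FiltDiagram A.obj.filt), ProjFilt.ofCone (limit.cone _)⟩
      property := ProjFilt.reduced_ofCone hEM A.property (limit.lift_π (filtCone _)) }
  property := ProjFilt.isoFilt_ofCone (limit.isLimit _)

noncomputable def toLimObj (A : QObj D) : A ⟶ (kqInclusion D).obj (limObj hEM A) :=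
  ObjectProperty.homMk
    ⟨limit.lift _ (filtCone _), by
      rintro _ ⟨j, rfl⟩
      exact (limit.lift_π (filtCone _) j).symm ▸ j.2⟩

noncomputable def limLift {A : QObj D} {B : KObj D} (f : A ⟶ (kqInclusion D).obj B) :
    limObj hEM A ⟶ B :=
  ObjectProperty.homMk <| ObjectProperty.homMk
    ⟨B.property.some.lift ((limit.cone (FiltDiagram A.obj.filt)).whisker (FiltCat.pull f.hom)),
      fun δ hδ => ⟨(FiltCat.pull f.hom).obj ⟨δ, hδ⟩,
        Sigma.ext rfl (heq_of_eq (B.property.some.fac _ ⟨δ, hδ⟩))⟩⟩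

theorem limLift_fac {A : QObj D} {B : KObj D} (f : A ⟶ (kqInclusion D).obj B)
    (j : FiltCat B.obj.obj.filt) :
    (limLift hEM f).hom.hom.toHom ≫ j.1.2 = limit.π _ ((FiltCat.pull f.hom).obj j) :=
  B.property.some.fac _ j

theorem toLimObj_comp_limLift {A : QObj D} {B : KObj D} (f : A ⟶ (kqInclusion D).obj B) :
    toLimObj hEM A ≫ (kqInclusion D).map (limLift hEM f) = f := by
  refine ObjectProperty.hom_ext _ (PHom.ext' (B.property.some.hom_ext fun j => ?_))
  exact (Category.assoc _ _ _).trans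
    ((limit.lift _ (filtCone _) ≫= limLift_fac hEM f j).trans (limit.lift_π _ _))

/-- As `g` is a morphism of filtrations, each `g ≫ δ` is a limit projection, namely the one at
the pulled-back element. -/
theorem limLift_toLimObj_comp {A : QObj D} {B : KObj D} (g : limObj hEM A ⟶ B) :
    limLift hEM (toLimObj hEM A ≫ (kqInclusion D).map g) = g := by
  refine ObjectProperty.hom_ext _ (ObjectProperty.hom_ext _
    (PHom.ext' (B.property.some.hom_ext fun j => ?_)))
  obtain ⟨_, hg⟩ := ProjFilt.eq_π_of_mem_ofCone (limit.lift_π (filtCone _))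
    (g.hom.hom.mem j.1 j.2)
  exact (limLift_fac hEM (toLimObj hEM A ≫ (kqInclusion D).map g) j).trans
    ((FiltCat.cone_π_congr (limit.cone _) (Category.assoc _ _ _) _ _).trans hg.symm)

noncomputable def limObjHomEquiv (A : QObj D) (B : KObj D) :
    (limObj hEM A ⟶ B) ≃ (A ⟶ (kqInclusion D).obj B) where
  toFun g := toLimObj hEM A ≫ (kqInclusion D).map g
  invFun := limLift hEM
  left_inv := limLift_toLimObj_comp hEM
  right_inv := toLimObj_comp_limLift hEM

noncomputable def limFunctor : QObj D ⥤ KObj D :=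
  Adjunction.leftAdjointOfEquiv (limObjHomEquiv hEM) fun _ _ _ _ _ => by
    simp only [limObjHomEquiv, Equiv.coe_fn_mk, Functor.map_comp, Category.assoc]

noncomputable def limFunctorAdjunction : limFunctor hEM ⊣ kqInclusion D :=
  Adjunction.adjunctionOfEquivLeft _ _

end Reflection

/-- for `D` complete, extremally co-well-powered and (extremal
epi, mono), there is a lift `K : QD → KD` of the projective limit functor
(the underlying object of `K(X,Q)` is `lim Q`, filtered by the canonical
morphisms `lim Q → X_δ` for `δ ∈ Q`), left adjoint to the inclusion
`KD → QD`, and `K` composed with the inclusion is naturally isomorphic to the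
identity functor of `KD`. -/
theorem filtered_projective_limit_functor [Limits.HasLimits D]
    (hecwp : ECWP D) (hEM : EMCat D) :
    ∃ K : QObj D ⥤ KObj D,
      Nonempty (K ⊣ kqInclusion D) ∧
      Nonempty (kqInclusion D ⋙ K ≅ 𝟭 (KObj D)) ∧
      ∀ A : QObj D, ∃ (c : Limits.Cone (FiltDiagram A.obj.filt))
        (_ : Limits.IsLimit c) (h : c.pt = (K.obj A).obj.obj.base),
          (K.obj A).obj.obj.filt.carrier =
            {δ' : MorFrom ((K.obj A).obj.obj.base) |
              ∃ j : FiltCat A.obj.filt, δ' = ⟨j.1.1, eqToHom h.symm ≫ c.π.app j⟩} := by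
  have : ∀ A : QObj D, HasLimit (FiltDiagram A.obj.filt) :=
    fun A => hasLimit_filtDiagram hecwp A.property
  refine ⟨limFunctor hEM, ⟨limFunctorAdjunction hEM⟩,
    ⟨asIso (limFunctorAdjunction hEM).counit⟩, fun A => ⟨limit.cone _, limit.isLimit _, ?_, ?_⟩⟩
  · exact rfl
  · exact Set.ext fun δ' => exists_congr fun j =>
      Eq.congr_right (congrArg (Sigma.mk j.1.1) (Category.id_comp _).symm)

end FilteredCats
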